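/- arXiv:0907.3427 — 6 statements merged into one kernel-verified Lean document; each statement's English description precedes it below -/
import Mathlib

section
/- Let k be a finite field with more than 3 elements. If A is a 4×4 matrix over k that commutes with the Kronecker product g₁ ⊗ g₂ for all g₁, g₂ ∈ SL₂(k), then A is a scalar multiple of the identity matrix. In particular, if additionally the trace of A is zero and the characteristic of k does not divide 4, then A = 0. -/
open Matrix

/-- Let `k` be a finite field with more than 3 elements. If `A` is a `4×4` matrix over `k`
commuting with the Kronecker product `g₁ ⊗ g₂` for all `g₁, g₂ ∈ SL₂(k)`, then `A` is a
scalar multiple of the identity; if moreover `tr A = 0` and `char k ∤ 4`, then `A = 0`. -/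
theorem schur_for_tensor_of_standard_reps
    {k : Type*} [Field k] [Fintype k] (hk : 3 < Fintype.card k)
    (A : Matrix (Fin 2 × Fin 2) (Fin 2 × Fin 2) k)
    (hA : ∀ g₁ g₂ : Matrix.SpecialLinearGroup (Fin 2) k,
      kroneckerMap (· * ·) (g₁ : Matrix (Fin 2) (Fin 2) k) (g₂ : Matrix (Fin 2) (Fin 2) k) * A
        = A * kroneckerMap (· * ·) (g₁ : Matrix (Fin 2) (Fin 2) k)
            (g₂ : Matrix (Fin 2) (Fin 2) k)) :
    (∃ c : k, A = c • (1 : Matrix (Fin 2 × Fin 2) (Fin 2 × Fin 2) k)) ∧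
    (A.trace = 0 → ¬ ((ringChar k : ℕ) ∣ 4) → A = 0) := by
  classical
  obtain ⟨a, ha0, ha1, han1⟩ : ∃ a : k, a ≠ 0 ∧ a ≠ 1 ∧ a ≠ -1 := by
    by_contra h
    push_neg at h
    have hsub : (Finset.univ : Finset k) ⊆ {0, 1, -1} := by
      intro x _
      simp only [Finset.mem_insert, Finset.mem_singleton]
      by_contra hx
      push_neg at hx
      exact hx.2.2 (h x hx.1 hx.2.1)
    have hle := Finset.card_le_card hsub
    have h3 : ({0, 1, -1} : Finset k).card ≤ 3 :=
      le_trans (Finset.card_insert_le _ _)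
        (by have := Finset.card_insert_le (1:k) ({-1} : Finset k); rw [Finset.card_singleton] at this; omega)
    rw [Finset.card_univ] at hle
    omega
  have ha2 : a * a ≠ 1 := by simp only [Ne, mul_self_eq_one_iff]; tauto
  have hainv : a ≠ a⁻¹ := by
    intro h
    apply ha2
    nth_rewrite 2 [h]
    exact mul_inv_cancel₀ ha0
  -- special linear group elements
  have hDdet : (!![a, 0; 0, a⁻¹] : Matrix (Fin 2) (Fin 2) k).det = 1 := by
    simp [Matrix.det_fin_two_of, mul_inv_cancel₀ ha0]
  have hEdet : (!![1, 1; 0, 1] : Matrix (Fin 2) (Fin 2) k).det = 1 := by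
    simp [Matrix.det_fin_two_of]
  set D : Matrix.SpecialLinearGroup (Fin 2) k := ⟨_, hDdet⟩ with hD
  set E : Matrix.SpecialLinearGroup (Fin 2) k := ⟨_, hEdet⟩ with hE
  have key : ∀ (g₁ g₂ : Matrix.SpecialLinearGroup (Fin 2) k) (p q : Fin 2 × Fin 2),
      (kroneckerMap (· * ·) (g₁ : Matrix (Fin 2) (Fin 2) k) (g₂ : Matrix (Fin 2) (Fin 2) k)
        * A) p q = (A * kroneckerMap (· * ·) (g₁ : Matrix (Fin 2) (Fin 2) k)
          (g₂ : Matrix (Fin 2) (Fin 2) k)) p q :=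
    fun g₁ g₂ p q => congrFun (congrFun (hA g₁ g₂) p) q
  -- off-diagonal in first coordinate vanishes
  have h1 : ∀ i j i' j' : Fin 2, i ≠ i' → A (i, j) (i', j') = 0 := by
    intro i j i' j' hii
    have h := key D 1 (i, j) (i', j')
    simp only [hD, Matrix.mul_apply, Fintype.sum_prod_type, Fin.sum_univ_two,
      kroneckerMap_apply, Matrix.SpecialLinearGroup.coe_one, Matrix.one_apply] at h
    fin_cases i <;> fin_cases i' <;> [exact absurd rfl hii; skip; skip; exact absurd rfl hii] <;>
      fin_cases j <;> fin_cases j' <;>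
      simp only [Fin.mk_zero, Fin.mk_one, Fin.isValue, Matrix.cons_val', Matrix.cons_val_zero,
        Matrix.cons_val_one, Matrix.head_cons, Matrix.head_fin_const, Matrix.empty_val',
        Matrix.cons_val_fin_one, if_true, if_false, one_ne_zero, zero_ne_one,
        ite_true, ite_false, mul_zero, zero_mul, mul_one, one_mul, add_zero, zero_add] at h ⊢ <;>
      simp only [Prod.mk_zero_zero, Prod.mk_one_one] at h ⊢ <;>
      simp at h <;>
      field_simp at h <;>
      (by_contra hne; apply ha2; apply mul_right_cancel₀ hne; rw [one_mul]) <;>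
      first
        | linear_combination h
        | linear_combination -h
  have h2 : ∀ i j i' j' : Fin 2, j ≠ j' → A (i, j) (i', j') = 0 := by
    intro i j i' j' hjj
    have h := key 1 D (i, j) (i', j')
    simp only [hD, Matrix.mul_apply, Fintype.sum_prod_type, Fin.sum_univ_two,
      kroneckerMap_apply, Matrix.SpecialLinearGroup.coe_one, Matrix.one_apply] at h
    fin_cases j <;> fin_cases j' <;> [exact absurd rfl hjj; skip; skip; exact absurd rfl hjj] <;>
      fin_cases i <;> fin_cases i' <;>
      simp only [Fin.mk_zero, Fin.mk_one, Fin.isValue, Matrix.cons_val', Matrix.cons_val_zero,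
        Matrix.cons_val_one, Matrix.head_cons, Matrix.head_fin_const, Matrix.empty_val',
        Matrix.cons_val_fin_one, if_true, if_false, one_ne_zero, zero_ne_one,
        ite_true, ite_false, mul_zero, zero_mul, mul_one, one_mul, add_zero, zero_add] at h ⊢ <;>
      simp only [Prod.mk_zero_zero, Prod.mk_one_one] at h ⊢ <;>
      simp at h <;>
      field_simp at h <;>
      (by_contra hne; apply ha2; apply mul_right_cancel₀ hne; rw [one_mul]) <;>
      first
        | linear_combination h
        | linear_combination -h
  have hd1 : ∀ j : Fin 2, A (1, j) (1, j) = A (0, j) (0, j) := by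
    intro j
    have h := key E 1 (0, j) (1, j)
    simp only [hE, Matrix.mul_apply, Fintype.sum_prod_type, Fin.sum_univ_two,
      kroneckerMap_apply, Matrix.SpecialLinearGroup.coe_one, Matrix.one_apply] at h
    fin_cases j <;>
      simp only [Fin.mk_zero, Fin.mk_one, Fin.isValue, Matrix.cons_val', Matrix.cons_val_zero,
        Matrix.cons_val_one, Matrix.head_cons, Matrix.head_fin_const, Matrix.empty_val',
        Matrix.cons_val_fin_one, if_true, if_false, one_ne_zero, zero_ne_one,
        ite_true, ite_false, mul_zero, zero_mul, mul_one, one_mul, add_zero, zero_add] at h ⊢ <;>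
      simp only [Prod.mk_zero_zero, Prod.mk_one_one] at h ⊢ <;>
      simp [h1 _ _ _ _ (by decide : (0:Fin 2) ≠ 1), h1 _ _ _ _ (by decide : (1:Fin 2) ≠ 0)] at h <;>
      first
        | linear_combination h
        | linear_combination -h
  have hd2 : ∀ i : Fin 2, A (i, 1) (i, 1) = A (i, 0) (i, 0) := by
    intro i
    have h := key 1 E (i, 0) (i, 1)
    simp only [hE, Matrix.mul_apply, Fintype.sum_prod_type, Fin.sum_univ_two,
      kroneckerMap_apply, Matrix.SpecialLinearGroup.coe_one, Matrix.one_apply] at h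
    fin_cases i <;>
      simp only [Fin.mk_zero, Fin.mk_one, Fin.isValue, Matrix.cons_val', Matrix.cons_val_zero,
        Matrix.cons_val_one, Matrix.head_cons, Matrix.head_fin_const, Matrix.empty_val',
        Matrix.cons_val_fin_one, if_true, if_false, one_ne_zero, zero_ne_one,
        ite_true, ite_false, mul_zero, zero_mul, mul_one, one_mul, add_zero, zero_add] at h ⊢ <;>
      simp only [Prod.mk_zero_zero, Prod.mk_one_one] at h ⊢ <;>
      simp [h2 _ _ _ _ (by decide : (0:Fin 2) ≠ 1), h2 _ _ _ _ (by decide : (1:Fin 2) ≠ 0)] at h <;>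
      first
        | linear_combination h
        | linear_combination -h
  have hscalar : A = A (0, 0) (0, 0) • (1 : Matrix (Fin 2 × Fin 2) (Fin 2 × Fin 2) k) := by
    ext ⟨i, j⟩ ⟨i', j'⟩
    rcases eq_or_ne i i' with rfl | hne
    · rcases eq_or_ne j j' with rfl | hne'
      · simp only [Matrix.smul_apply, Matrix.one_apply_eq, smul_eq_mul, mul_one]
        fin_cases i <;> fin_cases j <;>
          simp only [Fin.mk_zero, Fin.mk_one, Fin.isValue] <;>
          simp only [hd1, hd2]
      · rw [h2 _ _ _ _ hne']
        simp [Matrix.one_apply, hne']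
    · rw [h1 _ _ _ _ hne]
      simp [Matrix.one_apply, hne]
  refine ⟨⟨A (0, 0) (0, 0), hscalar⟩, fun htr hchar => ?_⟩
  have h4 : (4 : k) ≠ 0 := by
    intro h4
    apply hchar
    have : ((4 : ℕ) : k) = 0 := by exact_mod_cast h4
    exact (CharP.cast_eq_zero_iff k (ringChar k) 4).mp this
  have htr' : (4 : k) * A (0, 0) (0, 0) = 0 := by
    rw [hscalar] at htr
    rw [Matrix.trace_smul, Matrix.trace_one] at htr
    simp only [Fintype.card_prod, Fintype.card_fin, smul_eq_mul] at htr
    rw [← htr]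
    norm_num
    ring
  have hc0 : A (0, 0) (0, 0) = 0 := by
    rcases mul_eq_zero.mp htr' with h | h
    · exact absurd h h4
    · exact h
  rw [hscalar, hc0, zero_smul]
end

section
/- The first group cohomology H¹(SL₂(F₇), V₄) is nonzero, where V₄ is the space of homogeneous degree-4 polynomials in two variables over F₇ with SL₂(F₇) acting by linear substitution of variables. -/
open MvPolynomial

namespace SL2F7H1

local instance : Fact (Nat.Prime 7) := ⟨by norm_num⟩

abbrev G2 := Matrix.SpecialLinearGroup (Fin 2) (ZMod 7)
abbrev R7 := MvPolynomial (Fin 2) (ZMod 7)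

noncomputable def act (g : G2) : R7 →ₐ[ZMod 7] R7 :=
  aeval (fun j : Fin 2 => ∑ i : Fin 2, C ((g : Matrix (Fin 2) (Fin 2) (ZMod 7)) i j) * X i)

noncomputable def th : R7 := X 0 ^ 7 * X 1 - X 0 * X 1 ^ 7
noncomputable def uu : R7 := X 0 ^ 12 - X 0 ^ 6 * X 1 ^ 6 + X 1 ^ 12

noncomputable def toPoly (v : Fin 5 → ZMod 7) : R7 :=
  C (v 0) * (X 0 ^ 4 * X 1 ^ 0) + C (v 1) * (X 0 ^ 3 * X 1 ^ 1) +
    C (v 2) * (X 0 ^ 2 * X 1 ^ 2) + C (v 3) * (X 0 ^ 1 * X 1 ^ 3) +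
    C (v 4) * (X 0 ^ 0 * X 1 ^ 4)

lemma seven_eq_zero : (7 : R7) = 0 := by
  rw [← map_ofNat (C : ZMod 7 →+* R7) 7, show ((7 : ZMod 7)) = 0 from by decide, map_zero]

lemma C_pow_seven (x : ZMod 7) : (C x : R7) ^ 7 = C x := by
  rw [← map_pow, ZMod.pow_card]

lemma toPoly_isHomogeneous (v : Fin 5 → ZMod 7) : (toPoly v).IsHomogeneous 4 := by
  have h : ∀ (r : ZMod 7) (i j : ℕ), i + j = 4 →
      (C r * (X (0 : Fin 2) ^ i * X 1 ^ j)).IsHomogeneous 4 := by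
    intro r i j hij
    exact hij ▸ (((isHomogeneous_X_pow _ i).mul (isHomogeneous_X_pow _ j)).C_mul r)
  exact ((((h _ 4 0 rfl).add (h _ 3 1 rfl)).add (h _ 2 2 rfl)).add (h _ 1 3 rfl)).add
    (h _ 0 4 rfl)

lemma th_ne_zero : th ≠ 0 := by
  intro h
  have h2 := congrArg (aeval (R := ZMod 7) ![(Polynomial.X : Polynomial (ZMod 7)), 1]) h
  simp only [th, map_sub, map_mul, map_pow, aeval_X, Matrix.cons_val_zero, Matrix.cons_val_one,
    Matrix.head_cons, one_pow, mul_one, map_zero] at h2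
  have h3 : (Polynomial.X : Polynomial (ZMod 7)) ^ 7 = Polynomial.X := by
    rw [sub_eq_zero] at h2; exact h2
  have h4 := congrArg Polynomial.natDegree h3
  simp [Polynomial.natDegree_X_pow, Polynomial.natDegree_X] at h4

lemma cancel_th {p q : R7} (h : th * p = th * q) : p = q :=
  mul_left_cancel₀ th_ne_zero h

lemma act_act (g h : G2) (q : R7) : act g (act h q) = act (g * h) q := by
  rw [show act g (act h q) = ((act g).comp (act h)) q from rfl]
  refine DFunLike.congr_fun (f := (act g).comp (act h)) ?_ q
  apply MvPolynomial.algHom_ext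
  intro j
  simp only [AlgHom.comp_apply, act, aeval_X, map_sum, map_mul, aeval_C,
    MvPolynomial.algebraMap_eq, Matrix.SpecialLinearGroup.coe_mul, Fin.sum_univ_two,
    Matrix.mul_apply, map_add]
  ring

set_option maxHeartbeats 2000000 in
lemma act_th (g : G2) : act g th = th := by
  obtain ⟨a, b, c, d, ha, hb, hc, hd⟩ :
      ∃ a b c d : ZMod 7, (g : Matrix (Fin 2) (Fin 2) (ZMod 7)) 0 0 = a ∧
        (g : Matrix (Fin 2) (Fin 2) (ZMod 7)) 0 1 = b ∧
        (g : Matrix (Fin 2) (Fin 2) (ZMod 7)) 1 0 = c ∧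
        (g : Matrix (Fin 2) (Fin 2) (ZMod 7)) 1 1 = d := ⟨_, _, _, _, rfl, rfl, rfl, rfl⟩
  have hdet : a * d - b * c = 1 := by
    have := g.prop
    rw [Matrix.det_fin_two, ha, hb, hc, hd] at this
    linear_combination this
  have hdetC : (C a : R7) * C d - C b * C c = 1 := by
    rw [← map_mul, ← map_mul, ← map_sub, hdet, map_one]
  have hA := C_pow_seven a
  have hB := C_pow_seven b
  have hC := C_pow_seven c
  have hD := C_pow_seven d
  have h7 := seven_eq_zero
  simp only [th, act, map_sub, map_mul, map_pow, aeval_X, Fin.sum_univ_two, ha, hb, hc, hd]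
  linear_combination
    ((1:R7) * C d * X 0 ^ 7 * X 1 + (1) * C b * X 0 ^ 8) * hA +
    ((-8:R7) * C c * X 0 ^ 7 * X 1 + (-1) * C a * X 0 ^ 8) * hB +
    ((1:R7) * C d * X 1 ^ 8 + (8) * C b * X 0 * X 1 ^ 7) * hC +
    ((-1:R7) * C c * X 1 ^ 8 + (-1) * C a * X 0 * X 1 ^ 7) * hD +
    ((-1:R7) * X 0 * X 1 ^ 7 + (1) * X 0 ^ 7 * X 1 + (7) * C c ^ 6 * X 0 * X 1 ^ 7 +
      (-7) * C b * C d ^ 5 * X 0 ^ 2 * X 1 ^ 6 + (-21) * C b ^ 2 * C d ^ 4 * X 0 ^ 3 * X 1 ^ 5 +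
      (-35) * C b ^ 3 * C d ^ 3 * X 0 ^ 4 * X 1 ^ 4 + (-35) * C b ^ 4 * C d ^ 2 * X 0 ^ 5 * X 1 ^ 3 +
      (-21) * C b ^ 5 * C d * X 0 ^ 6 * X 1 ^ 2 + (-7) * C b ^ 6 * X 0 ^ 7 * X 1 +
      (21) * C a * C c ^ 5 * X 0 ^ 2 * X 1 ^ 6 + (35) * C a ^ 2 * C c ^ 4 * X 0 ^ 3 * X 1 ^ 5 +
      (35) * C a ^ 3 * C c ^ 3 * X 0 ^ 4 * X 1 ^ 4 + (21) * C a ^ 4 * C c ^ 2 * X 0 ^ 5 * X 1 ^ 3 +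
      (7) * C a ^ 5 * C c * X 0 ^ 6 * X 1 ^ 2) * hdetC +
    ((1:R7) * C c ^ 6 * X 0 * X 1 ^ 7 + (-1) * C b * C d ^ 5 * X 0 ^ 2 * X 1 ^ 6 +
      (1) * C b * C c * X 0 * X 1 ^ 7 + (-1) * C b * C c * X 0 ^ 7 * X 1 +
      (-1) * C b * C c * C d ^ 6 * X 0 * X 1 ^ 7 + (-3) * C b ^ 2 * C d ^ 4 * X 0 ^ 3 * X 1 ^ 5 +
      (-4) * C b ^ 2 * C c * C d ^ 5 * X 0 ^ 2 * X 1 ^ 6 + (-5) * C b ^ 3 * C d ^ 3 * X 0 ^ 4 * X 1 ^ 4 +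
      (-8) * C b ^ 3 * C c * C d ^ 4 * X 0 ^ 3 * X 1 ^ 5 + (-5) * C b ^ 4 * C d ^ 2 * X 0 ^ 5 * X 1 ^ 3 +
      (-10) * C b ^ 4 * C c * C d ^ 3 * X 0 ^ 4 * X 1 ^ 4 + (-3) * C b ^ 5 * C d * X 0 ^ 6 * X 1 ^ 2 +
      (-8) * C b ^ 5 * C c * C d ^ 2 * X 0 ^ 5 * X 1 ^ 3 + (-1) * C b ^ 6 * X 0 ^ 7 * X 1 +
      (-4) * C b ^ 6 * C c * C d * X 0 ^ 6 * X 1 ^ 2 + (3) * C a * C c ^ 5 * X 0 ^ 2 * X 1 ^ 6 +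
      (4) * C a * C b * C c ^ 6 * X 0 ^ 2 * X 1 ^ 6 + (5) * C a ^ 2 * C c ^ 4 * X 0 ^ 3 * X 1 ^ 5 +
      (8) * C a ^ 2 * C b * C c ^ 5 * X 0 ^ 3 * X 1 ^ 5 + (5) * C a ^ 3 * C c ^ 3 * X 0 ^ 4 * X 1 ^ 4 +
      (10) * C a ^ 3 * C b * C c ^ 4 * X 0 ^ 4 * X 1 ^ 4 + (3) * C a ^ 4 * C c ^ 2 * X 0 ^ 5 * X 1 ^ 3 +
      (8) * C a ^ 4 * C b * C c ^ 3 * X 0 ^ 5 * X 1 ^ 3 + (1) * C a ^ 5 * C c * X 0 ^ 6 * X 1 ^ 2 +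
      (4) * C a ^ 5 * C b * C c ^ 2 * X 0 ^ 6 * X 1 ^ 2 + (1) * C a ^ 6 * C b * C c * X 0 ^ 7 * X 1) *
      h7

noncomputable def Um (x : ZMod 7) : G2 :=
  ⟨!![1, x; 0, 1], by simp [Matrix.det_fin_two_of]⟩

noncomputable def Lm (y : ZMod 7) : G2 :=
  ⟨!![1, 0; y, 1], by simp [Matrix.det_fin_two_of]⟩

def cU (x : ZMod 7) : Fin 5 → ZMod 7 := ![6 * x ^ 5, 2 * x ^ 4, 4 * x ^ 3, 4 * x ^ 2, 2 * x]

def cL (y : ZMod 7) : Fin 5 → ZMod 7 := ![5 * y, 3 * y ^ 2, 3 * y ^ 3, 5 * y ^ 4, y ^ 5]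

set_option maxHeartbeats 2000000 in
lemma keyU (x : ZMod 7) : th * toPoly (cU x) = act (Um x) uu - uu := by
  have hx := C_pow_seven x
  have h7 := seven_eq_zero
  simp only [th, uu, toPoly, cU, act, Um, map_add, map_sub, map_mul, map_pow, map_ofNat,
    aeval_X, Fin.sum_univ_two, Matrix.of_apply, Matrix.cons_val', Matrix.cons_val_zero, Matrix.cons_val_one,
    Matrix.head_cons, Matrix.head_fin_const, Matrix.cons_val_fin_one, Matrix.empty_val',
    Matrix.cons_val_two, Matrix.cons_val_three, Matrix.cons_val_four, Matrix.tail_cons,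
    Matrix.head_cons, map_one, map_zero, pow_zero, pow_one, one_mul, mul_one, zero_mul,
    mul_zero, add_zero, zero_add]
  linear_combination
    -(((1):R7) * C x ^ 5 * X 0 ^ 12 +
      ((12):R7) * C x ^ 4 * X 0 ^ 11 * X 1 +
      ((66):R7) * C x ^ 3 * X 0 ^ 10 * X 1 ^ 2 +
      ((220):R7) * C x ^ 2 * X 0 ^ 9 * X 1 ^ 3 +
      ((495):R7) * C x * X 0 ^ 8 * X 1 ^ 4 +
      ((792):R7) * X 0 ^ 7 * X 1 ^ 5) * hx -
    (((7):R7) * C x ^ 4 * X 0 ^ 10 * X 1 ^ 2 +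
      ((28):R7) * C x ^ 3 * X 0 ^ 9 * X 1 ^ 3 +
      ((68):R7) * C x ^ 2 * X 0 ^ 8 * X 1 ^ 4 +
      ((112):R7) * C x * X 0 ^ 7 * X 1 ^ 5 +
      ((132):R7) * C x ^ 6 * X 0 ^ 6 * X 1 ^ 6 +
      ((114):R7) * C x ^ 5 * X 0 ^ 5 * X 1 ^ 7 +
      ((71):R7) * C x ^ 4 * X 0 ^ 4 * X 1 ^ 8 +
      ((32):R7) * C x ^ 3 * X 0 ^ 3 * X 1 ^ 9 +
      ((10):R7) * C x ^ 2 * X 0 ^ 2 * X 1 ^ 10 +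
      ((2):R7) * C x * X 0 * X 1 ^ 11) * h7

set_option maxHeartbeats 2000000 in
lemma keyL (y : ZMod 7) : th * toPoly (cL y) = act (Lm y) uu - uu := by
  have hx := C_pow_seven y
  have h7 := seven_eq_zero
  simp only [th, uu, toPoly, cL, act, Lm, map_add, map_sub, map_mul, map_pow, map_ofNat,
    aeval_X, Fin.sum_univ_two, Matrix.of_apply, Matrix.cons_val', Matrix.cons_val_zero, Matrix.cons_val_one,
    Matrix.head_cons, Matrix.head_fin_const, Matrix.cons_val_fin_one, Matrix.empty_val',
    Matrix.cons_val_two, Matrix.cons_val_three, Matrix.cons_val_four, Matrix.tail_cons,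
    Matrix.head_cons, map_one, map_zero, pow_zero, pow_one, one_mul, mul_one, zero_mul,
    mul_zero, add_zero, zero_add]
  linear_combination
    -(((792):R7) * X 0 ^ 5 * X 1 ^ 7 +
      ((495):R7) * C y * X 0 ^ 4 * X 1 ^ 8 +
      ((220):R7) * C y ^ 2 * X 0 ^ 3 * X 1 ^ 9 +
      ((66):R7) * C y ^ 3 * X 0 ^ 2 * X 1 ^ 10 +
      ((12):R7) * C y ^ 4 * X 0 * X 1 ^ 11 +
      ((1):R7) * C y ^ 5 * X 1 ^ 12) * hx -
    (((1):R7) * C y * X 0 ^ 11 * X 1 +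
      ((9):R7) * C y ^ 2 * X 0 ^ 10 * X 1 ^ 2 +
      ((31):R7) * C y ^ 3 * X 0 ^ 9 * X 1 ^ 3 +
      ((70):R7) * C y ^ 4 * X 0 ^ 8 * X 1 ^ 4 +
      ((113):R7) * C y ^ 5 * X 0 ^ 7 * X 1 ^ 5 +
      ((132):R7) * C y ^ 6 * X 0 ^ 6 * X 1 ^ 6 +
      ((113):R7) * C y * X 0 ^ 5 * X 1 ^ 7 +
      ((69):R7) * C y ^ 2 * X 0 ^ 4 * X 1 ^ 8 +
      ((29):R7) * C y ^ 3 * X 0 ^ 3 * X 1 ^ 9 +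
      ((8):R7) * C y ^ 4 * X 0 ^ 2 * X 1 ^ 10 +
      ((1):R7) * C y ^ 5 * X 0 * X 1 ^ 11) * h7


def applyM (a b c d : ZMod 7) (v : Fin 5 → ZMod 7) : Fin 5 → ZMod 7 :=
  ![v 0 * a ^ 4 + v 1 * (a ^ 3 * b) + v 2 * (a ^ 2 * b ^ 2) + v 3 * (a * b ^ 3) + v 4 * b ^ 4,
    v 0 * (4 * a ^ 3 * c) + v 1 * (a ^ 3 * d + 3 * a ^ 2 * c * b) +
      v 2 * (2 * a ^ 2 * b * d + 2 * a * c * b ^ 2) + v 3 * (3 * a * b ^ 2 * d + c * b ^ 3) +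
      v 4 * (4 * b ^ 3 * d),
    v 0 * (6 * a ^ 2 * c ^ 2) + v 1 * (3 * a ^ 2 * c * d + 3 * a * c ^ 2 * b) +
      v 2 * (a ^ 2 * d ^ 2 + 4 * a * c * b * d + c ^ 2 * b ^ 2) +
      v 3 * (3 * a * b * d ^ 2 + 3 * c * b ^ 2 * d) + v 4 * (6 * b ^ 2 * d ^ 2),
    v 0 * (4 * a * c ^ 3) + v 1 * (3 * a * c ^ 2 * d + c ^ 3 * b) +
      v 2 * (2 * a * c * d ^ 2 + 2 * c ^ 2 * b * d) + v 3 * (a * d ^ 3 + 3 * c * b * d ^ 2) +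
      v 4 * (4 * b * d ^ 3),
    v 0 * c ^ 4 + v 1 * (c ^ 3 * d) + v 2 * (c ^ 2 * d ^ 2) + v 3 * (c * d ^ 3) + v 4 * d ^ 4]

set_option maxHeartbeats 1000000 in
lemma act_toPoly (g : G2) (v : Fin 5 → ZMod 7) :
    act g (toPoly v) = toPoly (applyM ((g : Matrix (Fin 2) (Fin 2) (ZMod 7)) 0 0)
      ((g : Matrix (Fin 2) (Fin 2) (ZMod 7)) 0 1) ((g : Matrix (Fin 2) (Fin 2) (ZMod 7)) 1 0)
      ((g : Matrix (Fin 2) (Fin 2) (ZMod 7)) 1 1) v) := by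
  simp only [toPoly, applyM, act, map_add, map_mul, map_pow, map_ofNat, aeval_X, aeval_C,
    MvPolynomial.algebraMap_eq, Fin.sum_univ_two, Matrix.cons_val_zero, Matrix.cons_val_one,
    Matrix.head_cons, Matrix.cons_val_two, Matrix.cons_val_three, Matrix.cons_val_four,
    Matrix.tail_cons, Matrix.head_fin_const]
  ring

lemma toPoly_add (v w : Fin 5 → ZMod 7) : toPoly (v + w) = toPoly v + toPoly w := by
  simp only [toPoly, Pi.add_apply, map_add]
  ring

lemma toPoly_sub (v w : Fin 5 → ZMod 7) : toPoly (v - w) = toPoly v - toPoly w := by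
  simp only [toPoly, Pi.sub_apply, map_sub]
  ring

def PP (g : G2) : Prop := ∃ c : Fin 5 → ZMod 7, th * toPoly c = act g uu - uu

lemma PP_mul {g h : G2} (hg : PP g) (hh : PP h) : PP (g * h) := by
  obtain ⟨cg, hcg⟩ := hg
  obtain ⟨ch, hch⟩ := hh
  refine ⟨applyM ((g : Matrix (Fin 2) (Fin 2) (ZMod 7)) 0 0)
      ((g : Matrix (Fin 2) (Fin 2) (ZMod 7)) 0 1) ((g : Matrix (Fin 2) (Fin 2) (ZMod 7)) 1 0)
      ((g : Matrix (Fin 2) (Fin 2) (ZMod 7)) 1 1) ch + cg, ?_⟩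
  rw [toPoly_add, mul_add, ← act_toPoly, hcg]
  have : th * act g (toPoly ch) = act g (th * toPoly ch) := by
    rw [map_mul, act_th]
  rw [this, hch, map_sub, act_act]
  ring

lemma PP_of_c_ne_zero (g : G2) (hc : (g : Matrix (Fin 2) (Fin 2) (ZMod 7)) 1 0 ≠ 0) :
    g = Um (((g : Matrix (Fin 2) (Fin 2) (ZMod 7)) 0 0 - 1) *
        ((g : Matrix (Fin 2) (Fin 2) (ZMod 7)) 1 0)⁻¹) *
      Lm ((g : Matrix (Fin 2) (Fin 2) (ZMod 7)) 1 0) *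
      Um (((g : Matrix (Fin 2) (Fin 2) (ZMod 7)) 1 1 - 1) *
        ((g : Matrix (Fin 2) (Fin 2) (ZMod 7)) 1 0)⁻¹) := by
  have hdet : (g : Matrix (Fin 2) (Fin 2) (ZMod 7)) 0 0 * (g : Matrix (Fin 2) (Fin 2) (ZMod 7)) 1 1
      - (g : Matrix (Fin 2) (Fin 2) (ZMod 7)) 0 1 * (g : Matrix (Fin 2) (Fin 2) (ZMod 7)) 1 0 = 1 := by
    have := g.prop
    rwa [Matrix.det_fin_two] at this
  apply Subtype.ext
  rw [Matrix.SpecialLinearGroup.coe_mul, Matrix.SpecialLinearGroup.coe_mul]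
  simp only [Matrix.SpecialLinearGroup.coe_mul, Um, Lm, Matrix.mul_fin_two]
  ext i j
  fin_cases i <;> fin_cases j <;>
    simp only [Matrix.of_apply, Matrix.cons_val', Matrix.cons_val_zero, Matrix.cons_val_one,
      Matrix.head_cons, Matrix.head_fin_const, Matrix.empty_val', Matrix.cons_val_fin_one, Fin.zero_eta, Fin.mk_one] <;>
    field_simp <;>
    ring_nf
  · linear_combination -hdet

lemma Lm_mul_Lm (a b : ZMod 7) : Lm a * Lm b = Lm (a + b) := by
  apply Subtype.ext
  rw [Matrix.SpecialLinearGroup.coe_mul]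
  simp only [Matrix.SpecialLinearGroup.coe_mul, Lm, Matrix.mul_fin_two]
  norm_num [add_comm]

lemma Lm_zero : Lm 0 = 1 := by
  apply Subtype.ext
  simp only [Lm, Matrix.SpecialLinearGroup.coe_one, Matrix.one_fin_two]

lemma PP_all (g : G2) : PP g := by
  have case1 : ∀ g : G2, (g : Matrix (Fin 2) (Fin 2) (ZMod 7)) 1 0 ≠ 0 → PP g := by
    intro g hc
    rw [PP_of_c_ne_zero g hc]
    exact PP_mul (PP_mul ⟨_, keyU _⟩ ⟨_, keyL _⟩) ⟨_, keyU _⟩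
  by_cases hc : (g : Matrix (Fin 2) (Fin 2) (ZMod 7)) 1 0 = 0
  · have hdet : (g : Matrix (Fin 2) (Fin 2) (ZMod 7)) 0 0 *
        (g : Matrix (Fin 2) (Fin 2) (ZMod 7)) 1 1 = 1 := by
      have := g.prop
      rw [Matrix.det_fin_two, hc] at this
      linear_combination this
    have h2 : ((Lm 1 * g : G2) : Matrix (Fin 2) (Fin 2) (ZMod 7)) 1 0 ≠ 0 := by
      rw [Matrix.SpecialLinearGroup.coe_mul]
      simp only [Matrix.SpecialLinearGroup.coe_mul, Lm, Matrix.mul_apply, Fin.sum_univ_two,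
        Matrix.of_apply, Matrix.cons_val', Matrix.cons_val_zero, Matrix.cons_val_one,
        Matrix.head_cons, Matrix.head_fin_const, Matrix.empty_val', Matrix.cons_val_fin_one,
        one_mul, hc, add_zero]
      intro h0
      rw [h0, zero_mul] at hdet
      exact zero_ne_one hdet
    have hg : g = Lm 6 * (Lm 1 * g) := by
      rw [← mul_assoc, Lm_mul_Lm, show (6 : ZMod 7) + 1 = 0 from by decide, Lm_zero, one_mul]
    rw [hg]
    exact PP_mul ⟨_, keyL _⟩ (case1 _ h2)
  · exact case1 g hc

lemma eval_toPoly (y : ZMod 7) (v : Fin 5 → ZMod 7) :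
    eval ![1, y] (toPoly v) = v 0 + v 1 * y + v 2 * y ^ 2 + v 3 * y ^ 3 + v 4 * y ^ 4 := by
  simp only [toPoly, map_add, map_mul, map_pow, eval_C, eval_X, Matrix.cons_val_zero,
    Matrix.cons_val_one, Matrix.head_cons]
  ring

lemma toPoly_injective : Function.Injective toPoly := by
  intro v w h
  have e : ∀ y : ZMod 7, v 0 + v 1 * y + v 2 * y ^ 2 + v 3 * y ^ 3 + v 4 * y ^ 4 =
      w 0 + w 1 * y + w 2 * y ^ 2 + w 3 * y ^ 3 + w 4 * y ^ 4 := by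
    intro y
    rw [← eval_toPoly, ← eval_toPoly, h]
  have h7 : (7 : ZMod 7) = 0 := by decide
  have e0 := e 0
  have e1 := e 1
  have e2 := e 2
  have e3 := e 3
  have e4 := e 4
  have h0 : v 0 = w 0 := by linear_combination e0
  have h1 : v 1 = w 1 := by
    linear_combination 2 * e0 + 4 * e1 + 4 * e2 + 6 * e3 + 5 * e4 -
      (3 * (v 0 - w 0) + 7 * (v 1 - w 1) + 22 * (v 2 - w 2) + 74 * (v 3 - w 3) +
        262 * (v 4 - w 4)) * h7
  have h2 : v 2 = w 2 := by
    linear_combination 5 * e1 + 3 * e2 + 6 * e4 -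
      (2 * (v 0 - w 0) + 5 * (v 1 - w 1) + 16 * (v 2 - w 2) + 59 * (v 3 - w 3) +
        227 * (v 4 - w 4)) * h7
  have h3 : v 3 = w 3 := by
    linear_combination 6 * e0 + 5 * e1 + 5 * e2 + 5 * e4 -
      (3 * (v 0 - w 0) + 5 * (v 1 - w 1) + 15 * (v 2 - w 2) + 52 * (v 3 - w 3) +
        195 * (v 4 - w 4)) * h7
  have h4 : v 4 = w 4 := by
    linear_combination 5 * e0 + e1 + 2 * e2 + e3 + 5 * e4 -
      (2 * (v 0 - w 0) + 4 * (v 1 - w 1) + 14 * (v 2 - w 2) + 52 * (v 3 - w 3) +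
        199 * (v 4 - w 4)) * h7
  funext k
  fin_cases k
  · exact h0
  · exact h1
  · exact h2
  · exact h3
  · exact h4

noncomputable def mk2 (i j : ℕ) : Fin 2 →₀ ℕ := Finsupp.single 0 i + Finsupp.single 1 j

lemma mk2_apply0 (i j : ℕ) : mk2 i j 0 = i := by
  simp [mk2, Finsupp.single_apply]

lemma mk2_apply1 (i j : ℕ) : mk2 i j 1 = j := by
  simp [mk2, Finsupp.single_apply]

lemma mk2_eq (m : Fin 2 →₀ ℕ) : mk2 (m 0) (m 1) = m := by
  ext i
  fin_cases i
  · exact mk2_apply0 _ _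
  · exact mk2_apply1 _ _

lemma mk2_inj {i j i' j' : ℕ} : mk2 i j = mk2 i' j' ↔ i = i' ∧ j = j' := by
  constructor
  · intro h
    constructor
    · rw [← mk2_apply0 i j, h, mk2_apply0]
    · rw [← mk2_apply1 i j, h, mk2_apply1]
  · rintro ⟨rfl, rfl⟩
    rfl

lemma term_eq_monomial (r : ZMod 7) (i j : ℕ) :
    C r * (X (0 : Fin 2) ^ i * X 1 ^ j) = monomial (mk2 i j) r := by
  rw [X_pow_eq_monomial, X_pow_eq_monomial, monomial_mul, mul_one, C_mul_monomial, mul_one, mk2]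

lemma degree2 (m : Fin 2 →₀ ℕ) : m.degree = m 0 + m 1 := by
  rw [Finsupp.degree, ← Fin.sum_univ_two (f := fun i => m i)]
  exact Finset.sum_subset (Finset.subset_univ _) fun i _ hi => Finsupp.notMem_support_iff.mp hi

lemma exists_vec {w : R7} (hw : w.IsHomogeneous 4) : ∃ c : Fin 5 → ZMod 7, w = toPoly c := by
  refine ⟨![coeff (mk2 4 0) w, coeff (mk2 3 1) w, coeff (mk2 2 2) w, coeff (mk2 1 3) w,
    coeff (mk2 0 4) w], ?_⟩
  apply MvPolynomial.ext
  intro m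
  rw [toPoly]
  simp only [Matrix.cons_val_zero, Matrix.cons_val_one, Matrix.head_cons, Matrix.cons_val_two,
    Matrix.cons_val_three, Matrix.cons_val_four, Matrix.tail_cons, term_eq_monomial, coeff_add,
    coeff_monomial]
  by_cases hm : m 0 + m 1 = 4
  · have hm1 : m 1 ≤ 4 := by omega
    have h5 : m 1 = 0 ∨ m 1 = 1 ∨ m 1 = 2 ∨ m 1 = 3 ∨ m 1 = 4 := by omega
    rcases h5 with h | h | h | h | h <;>
      · have h0 : m 0 = 4 - m 1 := by omega
        rw [← mk2_eq m, h0, h]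
        norm_num [mk2_inj]
  · have n0 : ¬(mk2 4 0 = m) := fun h => hm (by rw [← h, mk2_apply0, mk2_apply1])
    have n1 : ¬(mk2 3 1 = m) := fun h => hm (by rw [← h, mk2_apply0, mk2_apply1])
    have n2 : ¬(mk2 2 2 = m) := fun h => hm (by rw [← h, mk2_apply0, mk2_apply1])
    have n3 : ¬(mk2 1 3 = m) := fun h => hm (by rw [← h, mk2_apply0, mk2_apply1])
    have n4 : ¬(mk2 0 4 = m) := fun h => hm (by rw [← h, mk2_apply0, mk2_apply1])
    rw [if_neg n0, if_neg n1, if_neg n2, if_neg n3, if_neg n4,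
      hw.coeff_eq_zero (by rw [degree2]; exact hm)]
    norm_num

noncomputable def ff (g : G2) : R7 := toPoly (PP_all g).choose

lemma hff (g : G2) : th * ff g = act g uu - uu := (PP_all g).choose_spec

end SL2F7H1

/-- `H¹(SL₂(F₇), V₄) ≠ 0`, where `V₄` is the space of homogeneous degree-4 polynomials in
two variables over `F₇` and `SL₂(F₇)` acts by linear substitution of the variables
(`Sym⁴` of the standard representation): there is a 1-cocycle valued in `V₄` which is not
the coboundary of any element of `V₄`. -/
theorem h1_sl2_f7_sym4_nonzero :
    ∃ f : Matrix.SpecialLinearGroup (Fin 2) (ZMod 7) → MvPolynomial (Fin 2) (ZMod 7),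
      (∀ g, (f g).IsHomogeneous 4) ∧
      (∀ g h, f (g * h) = f g +
        aeval (fun j : Fin 2 => ∑ i : Fin 2,
          C ((g : Matrix (Fin 2) (Fin 2) (ZMod 7)) i j) * X i) (f h)) ∧
      ¬ ∃ w : MvPolynomial (Fin 2) (ZMod 7), w.IsHomogeneous 4 ∧
        ∀ g, f g =
          aeval (fun j : Fin 2 => ∑ i : Fin 2,
            C ((g : Matrix (Fin 2) (Fin 2) (ZMod 7)) i j) * X i) w - w := by
  refine ⟨SL2F7H1.ff, fun g => SL2F7H1.toPoly_isHomogeneous _, ?_, ?_⟩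
  · intro g h
    show SL2F7H1.ff (g * h) = SL2F7H1.ff g + SL2F7H1.act g (SL2F7H1.ff h)
    apply SL2F7H1.cancel_th
    rw [SL2F7H1.hff, mul_add, SL2F7H1.hff,
      show SL2F7H1.th * SL2F7H1.act g (SL2F7H1.ff h) =
        SL2F7H1.act g (SL2F7H1.th * SL2F7H1.ff h) from by rw [map_mul, SL2F7H1.act_th],
      SL2F7H1.hff, map_sub, SL2F7H1.act_act]
    ring
  · rintro ⟨w, hw, hcob⟩
    obtain ⟨c, rfl⟩ := SL2F7H1.exists_vec hw
    have h1 : SL2F7H1.ff (SL2F7H1.Um 1) = SL2F7H1.toPoly (SL2F7H1.cU 1) :=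
      SL2F7H1.cancel_th (by rw [SL2F7H1.hff, SL2F7H1.keyU])
    have ht : SL2F7H1.toPoly (SL2F7H1.cU 1) =
        SL2F7H1.act (SL2F7H1.Um 1) (SL2F7H1.toPoly c) - SL2F7H1.toPoly c := by
      rw [← h1]
      exact hcob _
    rw [SL2F7H1.act_toPoly, ← SL2F7H1.toPoly_sub] at ht
    have hv := SL2F7H1.toPoly_injective ht
    have h4 := congrFun hv 4
    simp only [SL2F7H1.cU, SL2F7H1.applyM, SL2F7H1.Um, Pi.sub_apply, Matrix.cons_val_zero,
      Matrix.cons_val_one, Matrix.head_cons, Matrix.cons_val_two, Matrix.cons_val_three,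
      Matrix.cons_val_four, Matrix.tail_cons, Matrix.of_apply, Matrix.cons_val',
      Matrix.head_fin_const, Matrix.empty_val', Matrix.cons_val_fin_one] at h4
    norm_num at h4
    exact absurd h4 (by decide)
end

section
/- Let L be a field of characteristic different from 2, let G be a group, let ρ : G → GL(V) be an irreducible representation of G on a finite-dimensional L-vector space V of odd dimension, let χ : G → Lˣ be a character, and let B be a nonzero χ-invariant bilinear form on V. Then B is nondegenerate and symmetric: B(y, x) = B(x, y) for all x, y ∈ V. -/
lemma invariant_form_separating
    {L V : Type*} [Field L]
    [AddCommGroup V] [Module L V]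
    {G : Type*} [Group G] (ρ : G →* (V →ₗ[L] V)ˣ)
    (hirr : ∀ p : Submodule L V,
      (∀ g : G, ∀ x ∈ p, (ρ g : V →ₗ[L] V) x ∈ p) → p = ⊥ ∨ p = ⊤)
    (χ : G →* Lˣ)
    (C : V →ₗ[L] V →ₗ[L] L) (hC : C ≠ 0)
    (hinv : ∀ (g : G) (x y : V),
      C ((ρ g : V →ₗ[L] V) x) ((ρ g : V →ₗ[L] V) y) = (χ g : L) * C x y) :
    ∀ x : V, (∀ y : V, C x y = 0) → x = 0 := by
  have hK : LinearMap.ker C = ⊥ ∨ LinearMap.ker C = ⊤ := by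
    refine hirr _ ?_
    intro g x hx
    rw [LinearMap.mem_ker] at hx ⊢
    ext y
    have hy : ((ρ g : V →ₗ[L] V)) (((ρ g⁻¹ : (V →ₗ[L] V)ˣ) : V →ₗ[L] V) y) = y := by
      have : (ρ g * ρ g⁻¹ : (V →ₗ[L] V)ˣ) = 1 := by
        rw [← map_mul, mul_inv_cancel, map_one]
      calc ((ρ g : V →ₗ[L] V)) (((ρ g⁻¹ : (V →ₗ[L] V)ˣ) : V →ₗ[L] V) y)
          = ((ρ g * ρ g⁻¹ : (V →ₗ[L] V)ˣ) : V →ₗ[L] V) y := rfl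
        _ = y := by rw [this]; rfl
    calc C ((ρ g : V →ₗ[L] V) x) y
        = C ((ρ g : V →ₗ[L] V) x) ((ρ g : V →ₗ[L] V) (((ρ g⁻¹ : (V →ₗ[L] V)ˣ) : V →ₗ[L] V) y)) := by
          rw [hy]
      _ = (χ g : L) * C x (((ρ g⁻¹ : (V →ₗ[L] V)ˣ) : V →ₗ[L] V) y) := hinv g _ _
      _ = 0 := by rw [hx]; simp
  rcases hK with h | h
  · intro x hx
    have : x ∈ LinearMap.ker C := by
      rw [LinearMap.mem_ker]; ext y; exact hx y
    rw [h] at this; simpa using this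
  · exfalso
    apply hC
    ext x y
    have : x ∈ LinearMap.ker C := by rw [h]; trivial
    rw [LinearMap.mem_ker] at this
    simp [this]

/-- Let `L` be a field of characteristic `≠ 2`, `G` a group, `ρ : G → GL(V)` an
irreducible representation on a finite-dimensional `L`-vector space `V` of odd dimension,
`χ : G → Lˣ` a character, and `B` a nonzero `χ`-invariant bilinear form on `V`. Then `B`
is nondegenerate and symmetric. -/
theorem invariant_form_of_odd_dim_irreducible_is_symmetric
    {L V : Type*} [Field L] (hL : ringChar L ≠ 2)
    [AddCommGroup V] [Module L V] [FiniteDimensional L V]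
    (hodd : Odd (Module.finrank L V))
    {G : Type*} [Group G] (ρ : G →* (V →ₗ[L] V)ˣ)
    (hnt : Nontrivial V)
    (hirr : ∀ p : Submodule L V,
      (∀ g : G, ∀ x ∈ p, (ρ g : V →ₗ[L] V) x ∈ p) → p = ⊥ ∨ p = ⊤)
    (χ : G →* Lˣ)
    (B : V →ₗ[L] V →ₗ[L] L) (hB : B ≠ 0)
    (hinv : ∀ (g : G) (x y : V),
      B ((ρ g : V →ₗ[L] V) x) ((ρ g : V →ₗ[L] V) y) = (χ g : L) * B x y) :
    (∀ x : V, (∀ y : V, B x y = 0) → x = 0) ∧ (∀ x y : V, B y x = B x y) := by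
  have h2 : (2 : L) ≠ 0 := Ring.two_ne_zero hL
  refine ⟨invariant_form_separating ρ hirr χ B hB hinv, ?_⟩
  by_contra hsym
  push_neg at hsym
  set C : V →ₗ[L] V →ₗ[L] L := B - B.flip with hCdef
  have hCapp : ∀ x y : V, C x y = B x y - B y x := fun x y => rfl
  have hC : C ≠ 0 := by
    obtain ⟨x, y, hxy⟩ := hsym
    intro h
    apply hxy
    have h0 : C x y = 0 := by rw [h]; rfl
    rw [hCapp] at h0
    exact (sub_eq_zero.mp h0).symm
  have hCinv : ∀ (g : G) (x y : V),
      C ((ρ g : V →ₗ[L] V) x) ((ρ g : V →ₗ[L] V) y) = (χ g : L) * C x y := by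
    intro g x y
    rw [hCapp, hCapp, hinv, hinv, mul_sub]
  have hsep := invariant_form_separating ρ hirr χ C hC hCinv
  -- matrix argument
  set n := Module.finrank L V
  let b : Module.Basis (Fin n) L V := Module.finBasis L V
  set M := LinearMap.toMatrix₂ b b C with hM
  have hdet : M.det ≠ 0 := by
    rw [← LinearMap.separatingLeft_iff_det_ne_zero b]
    intro x hx
    exact hsep x fun y => hx y
  have hMT : M.transpose = -M := by
    ext i j
    simp only [Matrix.transpose_apply, Matrix.neg_apply, hM, LinearMap.toMatrix₂_apply]
    rw [hCapp, hCapp]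
    ring
  have : M.det = -M.det := by
    calc M.det = M.transpose.det := (Matrix.det_transpose M).symm
      _ = (-M).det := by rw [hMT]
      _ = (-1) ^ n * M.det := by rw [Matrix.det_neg]; simp
      _ = -M.det := by rw [hodd.neg_one_pow]; ring
  have h20 : (2 : L) * M.det = 0 := by
    rw [two_mul, add_eq_zero_iff_eq_neg]; exact this
  exact hdet ((mul_eq_zero.mp h20).resolve_left h2)
end

section
/- Let L be a field of characteristic different from 2, let G be a group, let ρ : G → GL(V) be an irreducible representation on a finite-dimensional L-vector space V with dim V ≥ 3, let χ : G → Lˣ be a character, and let B be a nonzero χ-invariant bilinear form on V. If the induced representation of G on the exterior square Λ²V is irreducible, then B is nondegenerate and symmetric. -/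
open ExteriorAlgebra

section aux

variable {L V : Type*} [Field L] [AddCommGroup V] [Module L V]

/-- Alternating 2-form from a bilinear form vanishing on the diagonal. -/
noncomputable def altOfBilin (A : V →ₗ[L] V →ₗ[L] L) (hA : ∀ x, A x x = 0) :
    V [⋀^Fin 2]→ₗ[L] L where
  toFun v := A (v 0) (v 1)
  map_update_add' v i x y := by
    fin_cases i <;> simp
  map_update_smul' v i c x := by
    fin_cases i <;> simp
  map_eq_zero_of_eq' v i j h hij := by
    fin_cases i <;> fin_cases j
    · exact absurd rfl hij
    · show A (v 0) (v 1) = 0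
      rw [show v 0 = v 1 from h]; exact hA _
    · show A (v 0) (v 1) = 0
      rw [show v 1 = v 0 from h]; exact hA _
    · exact absurd rfl hij

/-- Lift to a linear functional on the exterior algebra. -/
noncomputable def extLift (A : V →ₗ[L] V →ₗ[L] L) (hA : ∀ x, A x x = 0) :
    ExteriorAlgebra L V →ₗ[L] L :=
  liftAlternating (fun i => match i with
    | 2 => altOfBilin A hA
    | _ => 0)

lemma ι_mul_ι_eq_ιMulti (a b : V) :
    (ι L a : ExteriorAlgebra L V) * ι L b = ιMulti L 2 ![a, b] := by
  simp [ιMulti_apply, List.ofFn_succ]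

lemma extLift_ι_mul_ι (A : V →ₗ[L] V →ₗ[L] L) (hA : ∀ x, A x x = 0) (a b : V) :
    extLift A hA ((ι L a : ExteriorAlgebra L V) * ι L b) = A a b := by
  rw [ι_mul_ι_eq_ιMulti, extLift, liftAlternating_apply_ιMulti]
  simp [altOfBilin]

lemma ι_mul_ι_mem (a b : V) :
    (ι L a : ExteriorAlgebra L V) * ι L b ∈ (⋀[L]^2 V : Submodule L (ExteriorAlgebra L V)) := by
  have h : (⋀[L]^2 V : Submodule L (ExteriorAlgebra L V))
      = LinearMap.range (ι L : V →ₗ[L] ExteriorAlgebra L V)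
        * LinearMap.range (ι L : V →ₗ[L] ExteriorAlgebra L V) := pow_two _
  rw [h]
  exact Submodule.mul_mem_mul (LinearMap.mem_range_self _ a) (LinearMap.mem_range_self _ b)

lemma exteriorPower_two_induction {P : ExteriorAlgebra L V → Prop}
    (hmul : ∀ a b : V, P (ι L a * ι L b))
    (hadd : ∀ x y, P x → P y → P (x + y))
    {x : ExteriorAlgebra L V} (hx : x ∈ (⋀[L]^2 V : Submodule L (ExteriorAlgebra L V))) :
    P x := by
  have h : (⋀[L]^2 V : Submodule L (ExteriorAlgebra L V))
      = LinearMap.range (ι L : V →ₗ[L] ExteriorAlgebra L V)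
        * LinearMap.range (ι L : V →ₗ[L] ExteriorAlgebra L V) := pow_two _
  rw [h] at hx
  refine Submodule.mul_induction_on hx ?_ hadd
  rintro m ⟨a, rfl⟩ n ⟨b, rfl⟩
  exact hmul a b

end aux

section aux2
variable {L V : Type*} [Field L] [AddCommGroup V] [Module L V]

/-- The "wedge" of two linear functionals as a bilinear form. -/
noncomputable def wedgeForm (φ ψ : V →ₗ[L] L) : V →ₗ[L] V →ₗ[L] L :=
  LinearMap.mk₂ L (fun x y => φ x * ψ y - ψ x * φ y)
    (fun m₁ m₂ n => by simp; ring)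
    (fun c m n => by simp; ring)
    (fun m n₁ n₂ => by simp; ring)
    (fun c m n => by simp; ring)

lemma wedgeForm_apply (φ ψ : V →ₗ[L] L) (x y : V) :
    wedgeForm φ ψ x y = φ x * ψ y - ψ x * φ y := rfl

lemma wedgeForm_diag (φ ψ : V →ₗ[L] L) (x : V) : wedgeForm φ ψ x x = 0 := by
  rw [wedgeForm_apply]; ring

end aux2

/-- Let `L` be a field of characteristic `≠ 2`, `G` a group, `ρ : G → GL(V)` an
irreducible representation on a finite-dimensional `L`-vector space `V` with
`dim V ≥ 3`, `χ : G → Lˣ` a character, and `B` a nonzero `χ`-invariant bilinear form on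
`V`. If the induced representation of `G` on the exterior square `Λ²V` (the degree-2 part
of the exterior algebra, with `g` acting via the functorial map induced by `ρ g`) is
irreducible, then `B` is nondegenerate and symmetric. -/
theorem invariant_form_is_symmetric_of_exterior_square_irreducible
    {L V : Type*} [Field L] (hL : ringChar L ≠ 2)
    [AddCommGroup V] [Module L V] [FiniteDimensional L V]
    (hdim : 3 ≤ Module.finrank L V)
    {G : Type*} [Group G] (ρ : G →* (V →ₗ[L] V)ˣ)
    (hnt : Nontrivial V)
    (hirr : ∀ p : Submodule L V,
      (∀ g : G, ∀ x ∈ p, (ρ g : V →ₗ[L] V) x ∈ p) → p = ⊥ ∨ p = ⊤)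
    (χ : G →* Lˣ)
    (B : V →ₗ[L] V →ₗ[L] L) (hB : B ≠ 0)
    (hinv : ∀ (g : G) (x y : V),
      B ((ρ g : V →ₗ[L] V) x) ((ρ g : V →ₗ[L] V) y) = (χ g : L) * B x y)
    (hext_nt : (⋀[L]^2 V : Submodule L (ExteriorAlgebra L V)) ≠ ⊥)
    (hext_irr : ∀ q : Submodule L (ExteriorAlgebra L V),
      q ≤ (⋀[L]^2 V : Submodule L (ExteriorAlgebra L V)) →
      (∀ g : G, ∀ x ∈ q, ExteriorAlgebra.map (ρ g : V →ₗ[L] V) x ∈ q) →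
      q = ⊥ ∨ q = (⋀[L]^2 V : Submodule L (ExteriorAlgebra L V))) :
    (∀ x : V, (∀ y : V, B x y = 0) → x = 0) ∧ (∀ x y : V, B y x = B x y) := by
  classical
  have hρinv : ∀ (g : G) (y : V), (ρ g : V →ₗ[L] V) ((ρ g⁻¹ : V →ₗ[L] V) y) = y := by
    intro g y
    have h1 : ((ρ g : V →ₗ[L] V) * ((ρ g⁻¹ : (V →ₗ[L] V)ˣ) : V →ₗ[L] V)) = 1 := by
      rw [← Units.val_mul, ← map_mul, mul_inv_cancel, map_one, Units.val_one]
    calc (ρ g : V →ₗ[L] V) ((ρ g⁻¹ : V →ₗ[L] V) y)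
        = ((ρ g : V →ₗ[L] V) * ((ρ g⁻¹ : (V →ₗ[L] V)ˣ) : V →ₗ[L] V)) y := rfl
      _ = (1 : V →ₗ[L] V) y := by rw [h1]
      _ = y := rfl
  -- Part 1 : nondegeneracy
  have hker : ∀ g : G, ∀ x ∈ LinearMap.ker B, (ρ g : V →ₗ[L] V) x ∈ LinearMap.ker B := by
    intro g x hx
    rw [LinearMap.mem_ker] at hx ⊢
    ext y
    have hy : B ((ρ g : V →ₗ[L] V) x) y
        = B ((ρ g : V →ₗ[L] V) x) ((ρ g : V →ₗ[L] V) ((ρ g⁻¹ : V →ₗ[L] V) y)) := by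
      rw [hρinv]
    rw [LinearMap.zero_apply, hy, hinv, hx]
    simp
  have hnd : ∀ x : V, (∀ y : V, B x y = 0) → x = 0 := by
    rcases hirr (LinearMap.ker B) hker with h | h
    · intro x hx
      have hxk : x ∈ LinearMap.ker B := by
        rw [LinearMap.mem_ker]; ext y; simpa using hx y
      rw [h] at hxk
      simpa using hxk
    · exfalso
      apply hB
      ext x y
      have hxk : x ∈ LinearMap.ker B := h ▸ Submodule.mem_top
      rw [LinearMap.mem_ker] at hxk
      simp [hxk]
  refine ⟨hnd, ?_⟩
  -- Part 2 : symmetry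
  set A : V →ₗ[L] V →ₗ[L] L := B - B.flip with hAdef
  have hA : ∀ x : V, A x x = 0 := by
    intro x; simp [hAdef]
  have hAapp : ∀ x y : V, A x y = B x y - B y x := by
    intro x y; simp [hAdef]
  by_cases hA0 : A = 0
  · intro x y
    have h := LinearMap.ext_iff.1 (LinearMap.ext_iff.1 hA0 x) y
    rw [hAapp] at h
    simp only [LinearMap.zero_apply] at h
    exact (sub_eq_zero.mp h).symm
  · exfalso
    have hAinv : ∀ (g : G) (x y : V),
        A ((ρ g : V →ₗ[L] V) x) ((ρ g : V →ₗ[L] V) y) = (χ g : L) * A x y := by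
      intro g x y
      rw [hAapp, hAapp, hinv, hinv, mul_sub]
    obtain ⟨u, hu⟩ : ∃ u, A u ≠ 0 := by
      by_contra h
      push_neg at h
      exact hA0 (LinearMap.ext fun x => h x)
    obtain ⟨v, huv⟩ : ∃ v, A u v ≠ 0 := by
      by_contra h
      push_neg at h
      exact hu (LinearMap.ext fun y => h y)
    set f := extLift A hA with hfdef
    set q : Submodule L (ExteriorAlgebra L V) :=
      (⋀[L]^2 V : Submodule L (ExteriorAlgebra L V)) ⊓ LinearMap.ker f with hqdef
    have key : ∀ g : G, ∀ x ∈ (⋀[L]^2 V : Submodule L (ExteriorAlgebra L V)),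
        ExteriorAlgebra.map (ρ g : V →ₗ[L] V) x
          ∈ (⋀[L]^2 V : Submodule L (ExteriorAlgebra L V)) ∧
        f (ExteriorAlgebra.map (ρ g : V →ₗ[L] V) x) = (χ g : L) * f x := by
      intro g x hx
      refine exteriorPower_two_induction
        (P := fun z => ExteriorAlgebra.map (ρ g : V →ₗ[L] V) z
            ∈ (⋀[L]^2 V : Submodule L (ExteriorAlgebra L V)) ∧
          f (ExteriorAlgebra.map (ρ g : V →ₗ[L] V) z) = (χ g : L) * f z) ?_ ?_ hx
      · intro a b
        constructor
        · rw [map_mul, ExteriorAlgebra.map_apply_ι, ExteriorAlgebra.map_apply_ι]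
          exact ι_mul_ι_mem _ _
        · rw [map_mul, ExteriorAlgebra.map_apply_ι, ExteriorAlgebra.map_apply_ι,
            hfdef, extLift_ι_mul_ι, extLift_ι_mul_ι, hAinv]
      · intro x y hx hy
        constructor
        · rw [map_add]; exact Submodule.add_mem _ hx.1 hy.1
        · simp only [map_add, hx.2, hy.2, mul_add]
    have hq_inv : ∀ g : G, ∀ x ∈ q, ExteriorAlgebra.map (ρ g : V →ₗ[L] V) x ∈ q := by
      intro g x hx
      rw [hqdef, Submodule.mem_inf] at hx ⊢
      obtain ⟨hx2, hxk⟩ := hx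
      obtain ⟨hm, hf⟩ := key g x hx2
      refine ⟨hm, ?_⟩
      rw [LinearMap.mem_ker] at hxk ⊢
      rw [hf, hxk, mul_zero]
    rcases hext_irr q inf_le_left hq_inv with hq | hq
    · -- q = ⊥ : we construct a nonzero element of q, a contradiction
      obtain ⟨w, hw⟩ : ∃ w : V, w ∉ Submodule.span L ({u, v} : Set V) := by
        by_contra h
        push_neg at h
        have htop : Submodule.span L ({u, v} : Set V) = ⊤ := by
          rw [Submodule.eq_top_iff']; exact h
        have h1 : Module.finrank L (Submodule.span L ({u, v} : Set V)) ≤ 2 := by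
          have hle := finrank_span_finset_le_card (R := L) ({u, v} : Finset V)
          have hcard : ({u, v} : Finset V).card ≤ 2 :=
            (Finset.card_insert_le _ _).trans (by simp)
          have hcoe : ((({u, v} : Finset V) : Set V)) = ({u, v} : Set V) := by simp
          rw [Set.finrank, hcoe] at hle
          exact hle.trans hcard
        have h2 : Module.finrank L V ≤ 2 := by
          rw [← finrank_top L V, ← htop]; exact h1
        omega
      set w' : V := (A u v) • w - (A u w) • v with hw'def
      have hfz : A u w' = 0 := by
        rw [hw'def]
        simp only [map_sub, map_smul, smul_eq_mul]
        ring
      have hz2 : (ExteriorAlgebra.ι L u : ExteriorAlgebra L V) * ExteriorAlgebra.ι L w' ∈ q := by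
        rw [hqdef, Submodule.mem_inf]
        exact ⟨ι_mul_ι_mem _ _, by rw [LinearMap.mem_ker, hfdef, extLift_ι_mul_ι, hfz]⟩
      have hz0 : (ExteriorAlgebra.ι L u : ExteriorAlgebra L V) * ExteriorAlgebra.ι L w' = 0 := by
        rw [hq] at hz2; simpa using hz2
      have hu0 : u ≠ 0 := by
        rintro rfl; simp at huv
      have hw'u : w' ∉ Submodule.span L ({u} : Set V) := by
        intro hmem
        rw [Submodule.mem_span_singleton] at hmem
        obtain ⟨c, hc⟩ := hmem
        apply hw
        rw [hw'def] at hc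
        have h2 : (A u v) • w = c • u + (A u w) • v := sub_eq_iff_eq_add.mp hc.symm
        have h3 : w = (A u v)⁻¹ • (c • u + (A u w) • v) := by
          rw [← h2, smul_smul, inv_mul_cancel₀ huv, one_smul]
        rw [h3]
        exact Submodule.smul_mem _ _ (Submodule.add_mem _
          (Submodule.smul_mem _ _ (Submodule.subset_span (Set.mem_insert _ _)))
          (Submodule.smul_mem _ _ (Submodule.subset_span (by simp))))
      have hunw' : u ∉ Submodule.span L ({w'} : Set V) := by
        intro hmem
        rw [Submodule.mem_span_singleton] at hmem
        obtain ⟨c, hc⟩ := hmem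
        have hc0 : c ≠ 0 := by
          rintro rfl
          rw [zero_smul] at hc
          exact hu0 hc.symm
        apply hw'u
        rw [Submodule.mem_span_singleton]
        exact ⟨c⁻¹, by rw [← hc, smul_smul, inv_mul_cancel₀ hc0, one_smul]⟩
      obtain ⟨φ, hφu, hφmap⟩ :=
        Submodule.exists_dual_map_eq_bot_of_notMem hunw' inferInstance
      obtain ⟨ψ, hψw', hψmap⟩ :=
        Submodule.exists_dual_map_eq_bot_of_notMem hw'u inferInstance
      have hφw' : φ w' = 0 := by
        have hmem : φ w' ∈ Submodule.map φ (Submodule.span L ({w'} : Set V)) :=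
          Submodule.mem_map_of_mem (Submodule.mem_span_singleton_self _)
        rw [hφmap] at hmem
        exact (Submodule.mem_bot _).mp hmem
      have hψu : ψ u = 0 := by
        have hmem : ψ u ∈ Submodule.map ψ (Submodule.span L ({u} : Set V)) :=
          Submodule.mem_map_of_mem (Submodule.mem_span_singleton_self _)
        rw [hψmap] at hmem
        exact (Submodule.mem_bot _).mp hmem
      have hcontra := congrArg (extLift (wedgeForm φ ψ) (wedgeForm_diag φ ψ)) hz0
      rw [extLift_ι_mul_ι, map_zero, wedgeForm_apply, hφw', hψu] at hcontra
      simp only [mul_zero, zero_mul, sub_zero] at hcontra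
      exact (mul_ne_zero hφu hψw') hcontra
    · -- q = ⋀² : f vanishes on ⋀², contradicting A u v ≠ 0
      have hmem : (ExteriorAlgebra.ι L u : ExteriorAlgebra L V) * ExteriorAlgebra.ι L v ∈ q := by
        rw [hq]; exact ι_mul_ι_mem _ _
      rw [hqdef, Submodule.mem_inf] at hmem
      have h2 := hmem.2
      rw [LinearMap.mem_ker, hfdef, extLift_ι_mul_ι] at h2
      exact huv h2
end

section
/- With G, H, c, ρ, ψ, τ, ω as in the construction, define B on V ⊗ V as the bilinear form determined by B(x ⊗ y, x' ⊗ y') = ω(x, x') · ω(y, y'), and define χ : G → Lˣ by χ(h) = det ρ(h) · det ρ(c h c) for h ∈ H and χ(h c) = χ(h) for h ∈ H. Then χ is a group homomorphism with χ(c) = 1, B is a symmetric nondegenerate bilinear form on V ⊗ V, and B(ψ(g)u, ψ(g)v) = χ(g) · B(u, v) for all g ∈ G and u, v ∈ V ⊗ V. -/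
open TensorProduct

/-- With `G, H, c, ρ, ψ, τ, ω` as in the construction, let `B` on `V ⊗ V` be determined
by `B(x ⊗ y, x' ⊗ y') = ω(x, x')·ω(y, y')` (with `ω` the standard symplectic form on
`V = L²`), and let `χ : G → Lˣ` be given by `χ(h) = det ρ(h)·det ρ(chc)` for `h ∈ H` and
`χ(hc) = χ(h)`. Then `χ` is a homomorphism with `χ(c) = 1`, `B` is a symmetric
nondegenerate bilinear form, and `B(ψ(g)u, ψ(g)v) = χ(g)·B(u, v)` for all `g, u, v`. -/
theorem tensor_induction_pairing_symmetric_and_invariant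
    {G : Type*} [Group G] (H : Subgroup G) [H.Normal] (hH : H.index = 2)
    (c : G) (hc : c ∉ H) (hc2 : c * c = 1)
    {L : Type*} [Field L]
    (ρ : H →* ((Fin 2 → L) →ₗ[L] (Fin 2 → L))ˣ)
    (ψ : G → (TensorProduct L (Fin 2 → L) (Fin 2 → L) →ₗ[L]
      TensorProduct L (Fin 2 → L) (Fin 2 → L)))
    (hψH : ∀ (h : G) (hh : h ∈ H) (hh' : c * h * c ∈ H),
      ψ h = TensorProduct.map (ρ ⟨h, hh⟩ : (Fin 2 → L) →ₗ[L] (Fin 2 → L))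
        (ρ ⟨c * h * c, hh'⟩ : (Fin 2 → L) →ₗ[L] (Fin 2 → L)))
    (hψc : ∀ (h : G) (hh : h ∈ H) (hh' : c * h * c ∈ H),
      ψ (h * c) = (TensorProduct.map (ρ ⟨h, hh⟩ : (Fin 2 → L) →ₗ[L] (Fin 2 → L))
          (ρ ⟨c * h * c, hh'⟩ : (Fin 2 → L) →ₗ[L] (Fin 2 → L))) ∘ₗ
        (TensorProduct.comm L (Fin 2 → L) (Fin 2 → L)).toLinearMap)
    (B : TensorProduct L (Fin 2 → L) (Fin 2 → L) →ₗ[L]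
      TensorProduct L (Fin 2 → L) (Fin 2 → L) →ₗ[L] L)
    (hB : ∀ x y x' y' : Fin 2 → L, B (x ⊗ₜ[L] y) (x' ⊗ₜ[L] y') =
      (x 0 * x' 1 - x 1 * x' 0) * (y 0 * y' 1 - y 1 * y' 0))
    (χ : G → Lˣ)
    (hχH : ∀ (h : G) (hh : h ∈ H) (hh' : c * h * c ∈ H),
      χ h = Units.map LinearMap.det (ρ ⟨h, hh⟩) *
        Units.map LinearMap.det (ρ ⟨c * h * c, hh'⟩))
    (hχc : ∀ h ∈ H, χ (h * c) = χ h) :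
    (∀ g₁ g₂ : G, χ (g₁ * g₂) = χ g₁ * χ g₂) ∧
    χ c = 1 ∧
    (∀ u v, B u v = B v u) ∧
    (∀ u, (∀ v, B u v = 0) → u = 0) ∧
    (∀ (g : G) (u v), B (ψ g u) (ψ g v) = (χ g : L) * B u v) := by
  -- basic group facts
  have hcinv : c⁻¹ = c := inv_eq_of_mul_eq_one_right hc2
  have hconj : ∀ g : G, g ∈ H → c * g * c ∈ H := by
    intro g hg
    have := Subgroup.Normal.conj_mem ‹H.Normal› g hg c
    rwa [hcinv] at this
  have hmem : ∀ g : G, g ∉ H → g * c ∈ H := by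
    intro g hg
    rw [Subgroup.mul_mem_iff_of_index_two hH]
    constructor
    · intro h; exact absurd h hg
    · intro h; exact absurd h hc
  have hgc : ∀ g : G, (g * c) * c = g := by
    intro g; rw [mul_assoc, hc2, mul_one]
  -- χ abbreviations
  have hχH' : ∀ (h : G) (hh : h ∈ H),
      χ h = Units.map LinearMap.det (ρ ⟨h, hh⟩) *
        Units.map LinearMap.det (ρ ⟨c * h * c, hconj h hh⟩) :=
    fun h hh => hχH h hh (hconj h hh)
  -- multiplicativity on H
  have hχmulH : ∀ (a b : G) (ha : a ∈ H) (hb : b ∈ H), χ (a * b) = χ a * χ b := by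
    intro a b ha hb
    have hab : a * b ∈ H := H.mul_mem ha hb
    have h1 : (c * a * c) * (c * b * c) = c * (a * b) * c := by
      have h2 : (c * a * c) * (c * b * c) = c * a * (c * c) * b * c := by group
      rw [h2, hc2]; group
    rw [hχH' (a * b) hab, hχH' a ha, hχH' b hb]
    have e1 : (⟨a * b, hab⟩ : H) = ⟨a, ha⟩ * ⟨b, hb⟩ := rfl
    have e2 : (⟨c * (a * b) * c, hconj _ hab⟩ : H) =
        ⟨c * a * c, hconj a ha⟩ * ⟨c * b * c, hconj b hb⟩ := by
      apply Subtype.ext; exact h1.symm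
    rw [e1, e2, map_mul, map_mul, map_mul, map_mul]
    exact mul_mul_mul_comm _ _ _ _
  -- χ invariant under conjugation by c
  have hχconj : ∀ (g : G) (hg : g ∈ H), χ (c * g * c) = χ g := by
    intro g hg
    have h1 : c * (c * g * c) * c = g := by
      have h2 : c * (c * g * c) * c = (c * c) * g * (c * c) := by group
      rw [h2, hc2]; group
    rw [hχH' _ (hconj g hg), hχH' g hg]
    have e : (⟨c * (c * g * c) * c, hconj _ (hconj g hg)⟩ : H) = ⟨g, hg⟩ := Subtype.ext h1
    rw [e, mul_comm]
  -- χ of g ∉ H equals χ (g*c)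
  have hχnot : ∀ (g : G), g ∉ H → χ g = χ (g * c) := by
    intro g hg
    conv_lhs => rw [← hgc g]
    exact hχc _ (hmem g hg)
  -- the determinant lemma for ω
  have hω : ∀ (M : (Fin 2 → L) →ₗ[L] (Fin 2 → L)) (x y : Fin 2 → L),
      (M x 0 * M y 1 - M x 1 * M y 0) =
        LinearMap.det M * (x 0 * y 1 - x 1 * y 0) := by
    intro M x y
    have hdet : LinearMap.det M =
        M (Pi.single 0 1) 0 * M (Pi.single 1 1) 1 -
          M (Pi.single 0 1) 1 * M (Pi.single 1 1) 0 := by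
      rw [← LinearMap.det_toMatrix' M, Matrix.det_fin_two]
      have h0 : (fun j' : Fin 2 => if j' = 0 then (1:L) else 0) = Pi.single 0 1 := by
        funext j; simp [Pi.single_apply]
      have h1 : (fun j' : Fin 2 => if j' = 1 then (1:L) else 0) = Pi.single 1 1 := by
        funext j; simp [Pi.single_apply]
      simp only [LinearMap.toMatrix'_apply, h0, h1]
      ring
    have hx : ∀ z : Fin 2 → L, M z = z 0 • M (Pi.single 0 1) + z 1 • M (Pi.single 1 1) := by
      intro z
      have hz : z = z 0 • (Pi.single 0 1 : Fin 2 → L) + z 1 • (Pi.single 1 1 : Fin 2 → L) := by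
        funext j; fin_cases j <;> simp
      conv_lhs => rw [hz]
      simp [map_add, map_smul]
    rw [hx x, hx y, hdet]
    simp only [Pi.add_apply, Pi.smul_apply, smul_eq_mul]
    ring
  refine ⟨?_, ?_, ?_, ?_, ?_⟩
  · -- homomorphism
    intro g₁ g₂
    by_cases h1 : g₁ ∈ H <;> by_cases h2 : g₂ ∈ H
    · exact hχmulH _ _ h1 h2
    · -- g₁ ∈ H, g₂ ∉ H
      have hh2 : g₂ * c ∈ H := hmem g₂ h2
      have he : g₁ * g₂ = (g₁ * (g₂ * c)) * c := by
        rw [mul_assoc g₁, hgc]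
      rw [he, hχc _ (H.mul_mem h1 hh2), hχmulH _ _ h1 hh2, hχnot g₂ h2]
    · -- g₁ ∉ H, g₂ ∈ H
      have hh1 : g₁ * c ∈ H := hmem g₁ h1
      have he : g₁ * g₂ = ((g₁ * c) * (c * g₂ * c)) * c := by
        have h3 : ((g₁ * c) * (c * g₂ * c)) * c = g₁ * (c * c) * g₂ * (c * c) := by group
        rw [h3, hc2]; group
      rw [he, hχc _ (H.mul_mem hh1 (hconj g₂ h2)), hχmulH _ _ hh1 (hconj g₂ h2),
        hχconj g₂ h2, hχnot g₁ h1]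
    · -- g₁ ∉ H, g₂ ∉ H
      have hh1 : g₁ * c ∈ H := hmem g₁ h1
      have hh2 : g₂ * c ∈ H := hmem g₂ h2
      have he : g₁ * g₂ = (g₁ * c) * (c * (g₂ * c) * c) := by
        have h3 : (g₁ * c) * (c * (g₂ * c) * c) = g₁ * (c * c) * g₂ * (c * c) := by group
        rw [h3, hc2]; group
      rw [he, hχmulH _ _ hh1 (hconj _ hh2), hχconj _ hh2, hχnot g₁ h1, hχnot g₂ h2]
  · -- χ c = 1
    have h1 : χ c = χ 1 := by
      conv_lhs => rw [← one_mul c]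
      exact hχc 1 H.one_mem
    rw [h1, hχH' 1 H.one_mem]
    have e1 : (⟨(1 : G), H.one_mem⟩ : H) = 1 := rfl
    have e2 : (⟨c * 1 * c, hconj 1 H.one_mem⟩ : H) = 1 := by
      apply Subtype.ext; show c * 1 * c = 1
      rw [mul_one, hc2]
    rw [e1, e2]
    simp
  · -- symmetry
    have hsymm : B = B.flip := by
      refine TensorProduct.ext' fun x y => TensorProduct.ext' fun x' y' => ?_
      simp only [LinearMap.flip_apply, hB]
      ring
    intro u v
    conv_lhs => rw [hsymm]
    simp [LinearMap.flip_apply]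
  · -- nondegeneracy
    have hdecomp : ∀ u : TensorProduct L (Fin 2 → L) (Fin 2 → L),
        ∃ y0 y1 : Fin 2 → L, u = (Pi.single 0 1 : Fin 2 → L) ⊗ₜ[L] y0 +
          (Pi.single 1 1 : Fin 2 → L) ⊗ₜ[L] y1 := by
      intro u
      induction u using TensorProduct.induction_on with
      | zero => exact ⟨0, 0, by simp⟩
      | tmul x y =>
        refine ⟨x 0 • y, x 1 • y, ?_⟩
        have hx : x = x 0 • (Pi.single 0 1 : Fin 2 → L) + x 1 • (Pi.single 1 1 : Fin 2 → L) := by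
          funext j; fin_cases j <;> simp
        conv_lhs => rw [hx]
        rw [TensorProduct.add_tmul, TensorProduct.smul_tmul, TensorProduct.smul_tmul]
      | add a b ha hb =>
        obtain ⟨y0, y1, h⟩ := ha
        obtain ⟨z0, z1, h'⟩ := hb
        exact ⟨y0 + z0, y1 + z1, by
          rw [h, h', TensorProduct.tmul_add, TensorProduct.tmul_add]; abel⟩
    intro u hu
    obtain ⟨y0, y1, rfl⟩ := hdecomp u
    have key : ∀ v : Fin 2 → L,
        B ((Pi.single 0 1 : Fin 2 → L) ⊗ₜ[L] y0 + (Pi.single 1 1 : Fin 2 → L) ⊗ₜ[L] y1)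
          ((Pi.single 0 1 : Fin 2 → L) ⊗ₜ[L] v) = -(y1 0 * v 1 - y1 1 * v 0) ∧
        B ((Pi.single 0 1 : Fin 2 → L) ⊗ₜ[L] y0 + (Pi.single 1 1 : Fin 2 → L) ⊗ₜ[L] y1)
          ((Pi.single 1 1 : Fin 2 → L) ⊗ₜ[L] v) = (y0 0 * v 1 - y0 1 * v 0) := by
      intro v
      constructor <;>
      · rw [map_add, LinearMap.add_apply, hB, hB]
        simp [Pi.single_apply]
        try ring
    have k1 := (key (Pi.single 1 1)).1
    have k2 := (key (Pi.single 0 1)).1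
    have k3 := (key (Pi.single 1 1)).2
    have k4 := (key (Pi.single 0 1)).2
    rw [hu _] at k1 k2 k3 k4
    simp [Pi.single_apply] at k1 k2 k3 k4
    have hy0 : y0 = 0 := by
      funext j; fin_cases j
      · first | simpa using k3 | (symm; simpa using k3)
      · first | simpa using k4 | (symm; simpa using k4)
    have hy1 : y1 = 0 := by
      funext j; fin_cases j
      · first | simpa using k1 | (symm; simpa using k1)
      · first | simpa using k2 | (symm; simpa using k2)
    rw [hy0, hy1]
    simp
  · -- invariance
    intro g
    suffices h : B.compl₁₂ (ψ g) (ψ g) = (χ g : L) • B by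
      intro u v
      have := LinearMap.congr_fun (LinearMap.congr_fun h u) v
      simpa using this
    by_cases hg : g ∈ H
    · refine TensorProduct.ext' fun x y => TensorProduct.ext' fun x' y' => ?_
      simp only [LinearMap.compl₁₂_apply, LinearMap.smul_apply, smul_eq_mul]
      rw [hψH g hg (hconj g hg)]
      simp only [TensorProduct.map_tmul]
      rw [hB, hB, hω, hω, hχH g hg (hconj g hg)]
      simp only [Units.val_mul, Units.coe_map, MonoidHom.coe_coe]
      ring
    · have hh : g * c ∈ H := hmem g hg
      have hge : g = (g * c) * c := (hgc g).symm
      refine TensorProduct.ext' fun x y => TensorProduct.ext' fun x' y' => ?_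
      simp only [LinearMap.compl₁₂_apply, LinearMap.smul_apply, smul_eq_mul]
      conv_lhs => rw [hge]
      rw [hψc _ hh (hconj _ hh)]
      simp only [LinearMap.comp_apply, LinearEquiv.coe_toLinearMap, TensorProduct.comm_tmul,
        TensorProduct.map_tmul]
      rw [hB, hB, hω, hω]
      have hχg : χ g = χ (g * c) := hχnot g hg
      rw [hχg, hχH _ hh (hconj _ hh)]
      simp only [Units.val_mul, Units.coe_map, MonoidHom.coe_coe]
      ring
end

section
/- Let m and n be positive integers with m ≠ n, let M be the multiset of pairs of integers {(n, n+2m), (n+2m, n), (m, 2n+m), (2n+m, m), (m+n, m+n), (m+n, m+n)}, and let s be the swap involution on pairs. Then there are exactly four multisets N of cardinality 3 such that N + s(N) = M (where s(N) denotes the elementwise image of N under s and + is multiset sum), namely the four multisets {(a, b), (c, d), (m+n, m+n)} with (a, b) ∈ {(n, n+2m), (n+2m, n)} and (c, d) ∈ {(m, 2n+m), (2n+m, m)}; moreover none of these four multisets N satisfies s(N) = N. -/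
private lemma count_swap_map (x : ℤ × ℤ) (N : Multiset (ℤ × ℤ)) :
    Multiset.count x (N.map Prod.swap) = N.count x.swap := by
  conv_lhs => rw [← Prod.swap_swap x]
  exact Multiset.count_map_eq_count' Prod.swap N Prod.swap_injective x.swap

private lemma ne_of_count (p : ℤ × ℤ) {s t : Multiset (ℤ × ℤ)}
    (h : s.count p ≠ t.count p) : s ≠ t := fun e => h (e ▸ rfl)

private lemma count_helper (a a' b b' c : ℤ × ℤ) (N : Multiset (ℤ × ℤ))
    (hab : a ≠ b) (hac : a ≠ c) (hbc : b ≠ c)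
    (ha'a : a' ≠ a) (ha'b : a' ≠ b) (ha'c : a' ≠ c)
    (hb'a : b' ≠ a) (hb'b : b' ≠ b) (hb'c : b' ≠ c)
    (hA : N.count a = 1) (hA' : N.count a' = 0) (hB : N.count b = 1) (hB' : N.count b' = 0)
    (hC : N.count c = 1)
    (hzero : ∀ x, x ≠ a → x ≠ a' → x ≠ b → x ≠ b' → x ≠ c → N.count x = 0) :
    N = {a, b, c} := by
  ext x
  by_cases h1 : x = a
  · subst h1; simp [Multiset.count_cons, Multiset.count_singleton, hab, hac, hA]
  by_cases h2 : x = a'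
  · subst h2; simp [Multiset.count_cons, Multiset.count_singleton, ha'a, ha'b, ha'c, hA']
  by_cases h3 : x = b
  · subst h3; simp [Multiset.count_cons, Multiset.count_singleton, hab.symm, hbc, hB]
  by_cases h4 : x = b'
  · subst h4; simp [Multiset.count_cons, Multiset.count_singleton, hb'a, hb'b, hb'c, hB']
  by_cases h5 : x = c
  · subst h5; simp [Multiset.count_cons, Multiset.count_singleton, hac.symm, hbc.symm, hC]
  · rw [hzero x h1 h2 h3 h4 h5]
    simp [Multiset.count_cons, Multiset.count_singleton, h1, h3, h5]

set_option maxHeartbeats 2000000 in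
/-- Let `m ≠ n` be positive integers and let `M` be the multiset of pairs
`{(n, n+2m), (n+2m, n), (m, 2n+m), (2n+m, m), (m+n, m+n), (m+n, m+n)}`. Then the
multisets `N` of cardinality 3 with `N + s(N) = M` (where `s` is the swap involution,
applied elementwise) are exactly the four multisets `{(a,b), (c,d), (m+n, m+n)}` with
`(a,b) ∈ {(n, n+2m), (n+2m, n)}` and `(c,d) ∈ {(m, 2n+m), (2n+m, m)}`; these four are
pairwise distinct, and none of them satisfies `s(N) = N`. -/
theorem exterior_square_parameter_partitions
    (m n : ℤ) (hm : 0 < m) (hn : 0 < n) (hmn : m ≠ n) :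
    (∀ N : Multiset (ℤ × ℤ),
      (Multiset.card N = 3 ∧ N + N.map Prod.swap =
        ({(n, n + 2 * m), (n + 2 * m, n), (m, 2 * n + m), (2 * n + m, m),
          (m + n, m + n), (m + n, m + n)} : Multiset (ℤ × ℤ))) ↔
      (N = {(n, n + 2 * m), (m, 2 * n + m), (m + n, m + n)} ∨
       N = {(n, n + 2 * m), (2 * n + m, m), (m + n, m + n)} ∨
       N = {(n + 2 * m, n), (m, 2 * n + m), (m + n, m + n)} ∨
       N = {(n + 2 * m, n), (2 * n + m, m), (m + n, m + n)})) ∧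
    ([({(n, n + 2 * m), (m, 2 * n + m), (m + n, m + n)} : Multiset (ℤ × ℤ)),
      {(n, n + 2 * m), (2 * n + m, m), (m + n, m + n)},
      {(n + 2 * m, n), (m, 2 * n + m), (m + n, m + n)},
      {(n + 2 * m, n), (2 * n + m, m), (m + n, m + n)}].Pairwise (· ≠ ·)) ∧
    (∀ N : Multiset (ℤ × ℤ),
      (N = {(n, n + 2 * m), (m, 2 * n + m), (m + n, m + n)} ∨
       N = {(n, n + 2 * m), (2 * n + m, m), (m + n, m + n)} ∨
       N = {(n + 2 * m, n), (m, 2 * n + m), (m + n, m + n)} ∨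
       N = {(n + 2 * m, n), (2 * n + m, m), (m + n, m + n)}) →
      N.map Prod.swap ≠ N) := by
  set a : ℤ × ℤ := (n, n + 2 * m) with ha
  set a' : ℤ × ℤ := (n + 2 * m, n) with ha'
  set b : ℤ × ℤ := (m, 2 * n + m) with hb
  set b' : ℤ × ℤ := (2 * n + m, m) with hb'
  set c : ℤ × ℤ := (m + n, m + n) with hc
  have dAA' : a ≠ a' := by simp only [ha, ha', ne_eq, Prod.mk.injEq, not_and]; omega
  have dAB : a ≠ b := by simp only [ha, hb, ne_eq, Prod.mk.injEq, not_and]; omega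
  have dAB' : a ≠ b' := by simp only [ha, hb', ne_eq, Prod.mk.injEq, not_and]; omega
  have dAC : a ≠ c := by simp only [ha, hc, ne_eq, Prod.mk.injEq, not_and]; omega
  have dA'B : a' ≠ b := by simp only [ha', hb, ne_eq, Prod.mk.injEq, not_and]; omega
  have dA'B' : a' ≠ b' := by simp only [ha', hb', ne_eq, Prod.mk.injEq, not_and]; omega
  have dA'C : a' ≠ c := by simp only [ha', hc, ne_eq, Prod.mk.injEq, not_and]; omega
  have dBB' : b ≠ b' := by simp only [hb, hb', ne_eq, Prod.mk.injEq, not_and]; omega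
  have dBC : b ≠ c := by simp only [hb, hc, ne_eq, Prod.mk.injEq, not_and]; omega
  have dB'C : b' ≠ c := by simp only [hb', hc, ne_eq, Prod.mk.injEq, not_and]; omega
  have hswapA : a.swap = a' := rfl
  have hswapA' : a'.swap = a := rfl
  have hswapB : b.swap = b' := rfl
  have hswapB' : b'.swap = b := rfl
  have hswapC : c.swap = c := rfl
  refine ⟨?_, ?_, ?_⟩
  · -- main iff
    intro N
    constructor
    · rintro ⟨hcard, heq⟩
      have key : ∀ x : ℤ × ℤ, N.count x + N.count x.swap =
          Multiset.count x (a ::ₘ a' ::ₘ b ::ₘ b' ::ₘ c ::ₘ {c}) := by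
        intro x
        have h := congrArg (Multiset.count x) heq
        rw [Multiset.count_add, count_swap_map] at h
        exact h
      have kA := key a
      rw [hswapA] at kA
      simp [Multiset.count_cons, Multiset.count_singleton, dAA', dAB, dAB', dAC] at kA
      have kB := key b
      rw [hswapB] at kB
      simp [Multiset.count_cons, Multiset.count_singleton, dAB.symm, dA'B.symm, dBB', dBC] at kB
      have kC := key c
      rw [hswapC] at kC
      simp [Multiset.count_cons, Multiset.count_singleton, dAC.symm, dA'C.symm, dBC.symm,
        dB'C.symm] at kC
      have hCeq : N.count c = 1 := by omega
      have hzero : ∀ x, x ≠ a → x ≠ a' → x ≠ b → x ≠ b' → x ≠ c → N.count x = 0 := by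
        intro x h1 h2 h3 h4 h5
        have hx := key x
        simp only [Multiset.count_cons, Multiset.count_singleton, h1, h2, h3, h4, h5,
          if_false, ite_false, add_zero, zero_add] at hx
        omega
      rcases (by omega : N.count a = 1 ∧ N.count a' = 0 ∨ N.count a = 0 ∧ N.count a' = 1)
        with ⟨hA1, hA2⟩ | ⟨hA1, hA2⟩ <;>
      rcases (by omega : N.count b = 1 ∧ N.count b' = 0 ∨ N.count b = 0 ∧ N.count b' = 1)
        with ⟨hB1, hB2⟩ | ⟨hB1, hB2⟩
      · exact Or.inl (count_helper a a' b b' c N dAB dAC dBC dAA'.symm dA'B dA'C dAB'.symm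
          dBB'.symm dB'C hA1 hA2 hB1 hB2 hCeq hzero)
      · refine Or.inr (Or.inl (count_helper a a' b' b c N dAB' dAC dB'C dAA'.symm dA'B' dA'C
          dAB.symm dBB' dBC hA1 hA2 hB2 hB1 hCeq ?_))
        intro x h1 h2 h3 h4 h5; exact hzero x h1 h2 h4 h3 h5
      · refine Or.inr (Or.inr (Or.inl (count_helper a' a b b' c N dA'B dA'C dBC dAA' dAB dAC
          dA'B'.symm dBB'.symm dB'C hA2 hA1 hB1 hB2 hCeq ?_)))
        intro x h1 h2 h3 h4 h5; exact hzero x h2 h1 h3 h4 h5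
      · refine Or.inr (Or.inr (Or.inr (count_helper a' a b' b c N dA'B' dA'C dB'C dAA' dAB'
          dAC dA'B.symm dBB' dBC hA2 hA1 hB2 hB1 hCeq ?_)))
        intro x h1 h2 h3 h4 h5; exact hzero x h2 h1 h4 h3 h5
    · rintro (rfl | rfl | rfl | rfl) <;>
        refine ⟨rfl, ?_⟩ <;>
        · ext x
          obtain ⟨x1, x2⟩ := x
          rw [Multiset.count_add, count_swap_map]
          simp only [ha, ha', hb, hb', hc, Prod.swap_prod_mk, Multiset.insert_eq_cons,
            Multiset.count_cons, Multiset.count_singleton, Prod.mk.injEq]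
          split_ifs <;> omega
  · -- pairwise distinct
    have c1 : Multiset.count b ({a, b, c} : Multiset (ℤ × ℤ)) = 1 := by
      simp [Multiset.count_cons, Multiset.count_singleton, dAB.symm, dBC]
    have c2 : Multiset.count b ({a, b', c} : Multiset (ℤ × ℤ)) = 0 := by
      simp [Multiset.count_cons, Multiset.count_singleton, dAB.symm, dBB', dBC]
    have c3 : Multiset.count b ({a', b, c} : Multiset (ℤ × ℤ)) = 1 := by
      simp [Multiset.count_cons, Multiset.count_singleton, dA'B.symm, dBC]
    have c4 : Multiset.count b ({a', b', c} : Multiset (ℤ × ℤ)) = 0 := by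
      simp [Multiset.count_cons, Multiset.count_singleton, dA'B.symm, dBB', dBC]
    have e1 : Multiset.count a ({a, b, c} : Multiset (ℤ × ℤ)) = 1 := by
      simp [Multiset.count_cons, Multiset.count_singleton, dAB, dAC]
    have e2 : Multiset.count a ({a, b', c} : Multiset (ℤ × ℤ)) = 1 := by
      simp [Multiset.count_cons, Multiset.count_singleton, dAB', dAC]
    have e3 : Multiset.count a ({a', b, c} : Multiset (ℤ × ℤ)) = 0 := by
      simp [Multiset.count_cons, Multiset.count_singleton, dAA', dAB, dAC]
    have e4 : Multiset.count a ({a', b', c} : Multiset (ℤ × ℤ)) = 0 := by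
      simp [Multiset.count_cons, Multiset.count_singleton, dAA', dAB', dAC]
    refine List.Pairwise.cons ?_ (List.Pairwise.cons ?_ (List.Pairwise.cons ?_
      (List.Pairwise.cons ?_ List.Pairwise.nil)))
    · rintro x hx
      rcases List.mem_cons.mp hx with rfl | hx
      · exact ne_of_count b (by rw [c1, c2]; omega)
      rcases List.mem_cons.mp hx with rfl | hx
      · exact ne_of_count a (by rw [e1, e3]; omega)
      rcases List.mem_cons.mp hx with rfl | hx
      · exact ne_of_count a (by rw [e1, e4]; omega)
      · exact absurd hx List.not_mem_nil
    · rintro x hx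
      rcases List.mem_cons.mp hx with rfl | hx
      · exact ne_of_count a (by rw [e2, e3]; omega)
      rcases List.mem_cons.mp hx with rfl | hx
      · exact ne_of_count a (by rw [e2, e4]; omega)
      · exact absurd hx List.not_mem_nil
    · rintro x hx
      rcases List.mem_cons.mp hx with rfl | hx
      · exact ne_of_count b (by rw [c3, c4]; omega)
      · exact absurd hx List.not_mem_nil
    · rintro x hx
      exact absurd hx List.not_mem_nil
  · -- no fixed points
    rintro N (rfl | rfl | rfl | rfl) <;>
      · intro h
        have h2 := congrArg (Multiset.count a') h
        rw [count_swap_map, hswapA'] at h2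
        revert h2
        simp only [ha, ha', hb, hb', hc, Multiset.insert_eq_cons, Multiset.count_cons,
          Multiset.count_singleton, Prod.mk.injEq]
        split_ifs <;> omega
end
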